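/- arXiv:2107.12361 — 6 statements merged into one kernel-verified Lean document; each statement's English description precedes it below -/
import Mathlib

section
/- Global convergence of Gauss–Newton with backtracking-Armijo line search (Theorem A.1): assume (A1)–(A4). Let β ∈ (0,1), τ ∈ (0,1), α₀ > 0, and suppose sequences (v_k) in ℝ^n, (s_k) in ℝ^n and stepsizes (α_k) satisfy, for every k: (i) J(v_k)ᵀJ(v_k) s_k = −J(v_k)ᵀ r(v_k); (ii) 0 < α_k ≤ α₀ and the Armijo condition 𝒥(v_k + α_k s_k) ≤ 𝒥(v_k) + β α_k (s_kᵀ∇𝒥(v_k)) holds; (iii) either α_k = α₀ or the Armijo condition fails at stepsize α_k/τ (backtracking); (iv) v_{k+1} = v_k + α_k s_k. Then ∇𝒥(v_k) = J(v_k)ᵀ r(v_k) → 0 as k → ∞. -/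
/-!
The Taylor bound for `r` with Lipschitz Jacobian gives the descent inequality
`𝒥(w) ≤ 𝒥(v) + ⟪w - v, ∇𝒥(v)⟫ + C‖w - v‖²` with `C = ω L_J + L_r² / 2`. Along a Gauss–Newton
direction `⟪s, ∇𝒥(v)⟫ = -‖J s‖² ≤ -ν²‖s‖²`, so the Armijo condition holds for every step up to
`(1 - β) ν² / C`, and backtracking keeps `α_k ≥ min α₀ (τ (1 - β) ν² / C)`. As moreover
`‖∇𝒥(v)‖ ≤ L_r ‖J s‖`, each iteration decreases the nonnegative objective by a fixed multiple of
`‖∇𝒥(v_k)‖²`, which is therefore summable.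
-/

open scoped RealInnerProductSpace

/-- The nonlinear least-squares objective `𝒥(v) = (1/2)‖r(v)‖²`. -/
noncomputable def nlsObj {n m : ℕ} (r : EuclideanSpace ℝ (Fin n) → EuclideanSpace ℝ (Fin m))
    (v : EuclideanSpace ℝ (Fin n)) : ℝ :=
  (1 / 2) * ‖r v‖ ^ 2

/-- The Jacobian `J(v)` of `r` at `v`, as a continuous linear map. -/
noncomputable def nlsJ {n m : ℕ} (r : EuclideanSpace ℝ (Fin n) → EuclideanSpace ℝ (Fin m))
    (v : EuclideanSpace ℝ (Fin n)) :
    EuclideanSpace ℝ (Fin n) →L[ℝ] EuclideanSpace ℝ (Fin m) :=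
  fderiv ℝ r v

/-- The gradient `∇𝒥(v) = J(v)ᵀ r(v)`. -/
noncomputable def nlsGrad {n m : ℕ} (r : EuclideanSpace ℝ (Fin n) → EuclideanSpace ℝ (Fin m))
    (v : EuclideanSpace ℝ (Fin n)) : EuclideanSpace ℝ (Fin n) :=
  ContinuousLinearMap.adjoint (nlsJ r v) (r v)

open Filter Topology ContinuousLinearMap

section Calculus

variable {E F : Type*} [NormedAddCommGroup E] [NormedSpace ℝ E]
  [NormedAddCommGroup F] [NormedSpace ℝ F]

theorem norm_sub_sub_fderiv_le_of_lipschitz_fderiv {f : E → F} (hf : Differentiable ℝ f)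
    {L : ℝ} (hL : 0 ≤ L) (hlip : ∀ x y, ‖fderiv ℝ f x - fderiv ℝ f y‖ ≤ L * ‖x - y‖) (x y : E) :
    ‖f y - f x - fderiv ℝ f x (y - x)‖ ≤ L * ‖y - x‖ ^ 2 := by
  have hbound : ∀ z ∈ segment ℝ x y, ‖fderiv ℝ f z - fderiv ℝ f x‖ ≤ L * ‖y - x‖ :=
    fun z hz => (hlip z x).trans (by gcongr; exact norm_sub_le_of_mem_segment hz)
  calc ‖f y - f x - fderiv ℝ f x (y - x)‖ ≤ L * ‖y - x‖ * ‖y - x‖ :=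
        (convex_segment x y).norm_image_sub_le_of_norm_fderiv_le' (fun z _ => hf z) hbound
          (left_mem_segment ℝ x y) (right_mem_segment ℝ x y)
    _ = L * ‖y - x‖ ^ 2 := by ring

end Calculus

section NormalEquations

variable {E F : Type*} [NormedAddCommGroup E] [InnerProductSpace ℝ E] [CompleteSpace E]
  [NormedAddCommGroup F] [InnerProductSpace ℝ F] [CompleteSpace F]
  {A : E →L[ℝ] F} {b : F} {s : E}

theorem inner_adjoint_apply_of_normal_eq (h : adjoint A (A s) = -adjoint A b) :
    ⟪s, adjoint A b⟫ = -‖A s‖ ^ 2 := by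
  rw [← neg_neg (adjoint A b), ← h, inner_neg_right, adjoint_inner_right,
    real_inner_self_eq_norm_sq]

theorem norm_adjoint_apply_le_of_normal_eq (h : adjoint A (A s) = -adjoint A b) :
    ‖adjoint A b‖ ≤ ‖A‖ * ‖A s‖ := by
  rw [← norm_neg, ← h, ← adjoint.norm_map A]
  exact le_opNorm _ _

end NormalEquations

section LineSearch

variable {E : Type*} [NormedAddCommGroup E] [InnerProductSpace ℝ E]
  {f : E → ℝ} {x s g : E} {C μ β : ℝ}

theorem lt_mul_of_not_armijo (hdesc : ∀ w, f w ≤ f x + ⟪w - x, g⟫ + C * ‖w - x‖ ^ 2)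
    (hcurv : μ * ‖s‖ ^ 2 ≤ -⟪s, g⟫) (hβ : β < 1) {t : ℝ} (ht : 0 < t)
    (hfail : ¬ f (x + t • s) ≤ f x + β * t * ⟪s, g⟫) : (1 - β) * μ < C * t := by
  have hstep := hdesc (x + t • s)
  rw [add_sub_cancel_left, real_inner_smul_left, norm_smul, Real.norm_of_nonneg ht.le] at hstep
  have hlt : (1 - β) * μ * ‖s‖ ^ 2 < C * t * ‖s‖ ^ 2 := by
    have : t * ((1 - β) * -⟪s, g⟫) < t * (C * t * ‖s‖ ^ 2) := by linarith [not_le.1 hfail]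
    calc (1 - β) * μ * ‖s‖ ^ 2 ≤ (1 - β) * -⟪s, g⟫ := by
          rw [mul_assoc]; exact mul_le_mul_of_nonneg_left hcurv (by linarith)
      _ < C * t * ‖s‖ ^ 2 := lt_of_mul_lt_mul_left this ht.le
  exact lt_of_mul_lt_mul_right hlt (sq_nonneg _)

theorem min_le_of_backtracking (hdesc : ∀ w, f w ≤ f x + ⟪w - x, g⟫ + C * ‖w - x‖ ^ 2)
    (hcurv : μ * ‖s‖ ^ 2 ≤ -⟪s, g⟫) (hβ : β < 1) (hC : 0 < C) {τ α α₀ : ℝ} (hτ : 0 < τ)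
    (hα : 0 < α) (hback : α = α₀ ∨ ¬ f (x + (α / τ) • s) ≤ f x + β * (α / τ) * ⟪s, g⟫) :
    min α₀ (τ * (1 - β) * μ / C) ≤ α := by
  rcases hback with rfl | hfail
  · exact min_le_left _ _
  · have hlt := lt_mul_of_not_armijo hdesc hcurv hβ (div_pos hα hτ) hfail
    refine (min_le_right _ _).trans ((div_le_iff₀ hC).2 ?_)
    calc τ * (1 - β) * μ = τ * ((1 - β) * μ) := by ring
      _ ≤ τ * (C * (α / τ)) := by gcongr
      _ = α * C := by field_simp

theorem add_mul_norm_sq_le_of_armijo {α αmin c : ℝ}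
    (harmijo : f (x + α • s) ≤ f x + β * α * ⟪s, g⟫) (hβ : 0 ≤ β) (hαmin : 0 ≤ αmin)
    (hα : αmin ≤ α) (hc : 0 ≤ c) (hangle : c * ‖g‖ ^ 2 ≤ -⟪s, g⟫) :
    f (x + α • s) + β * αmin * c * ‖g‖ ^ 2 ≤ f x := by
  have : β * αmin * (c * ‖g‖ ^ 2) ≤ β * α * -⟪s, g⟫ :=
    mul_le_mul (mul_le_mul_of_nonneg_left hα hβ) hangle (mul_nonneg hc (sq_nonneg _))
      (mul_nonneg hβ (hαmin.trans hα))
  linarith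

end LineSearch

theorem summable_of_add_le {f a : ℕ → ℝ} (hf : ∀ k, 0 ≤ f k) (ha : ∀ k, 0 ≤ a k)
    (h : ∀ k, f (k + 1) + a k ≤ f k) : Summable a := by
  have htel : ∀ N, f N + ∑ k ∈ Finset.range N, a k ≤ f 0 := by
    intro N
    induction N with
    | zero => simp
    | succ N ih => rw [Finset.sum_range_succ]; linarith [h N]
  exact summable_of_sum_range_le ha fun N => by linarith [htel N, hf N]

theorem tendsto_zero_of_summable_norm_sq {E : Type*} [SeminormedAddCommGroup E] {u : ℕ → E}
    (h : Summable fun k => ‖u k‖ ^ 2) : Tendsto u atTop (𝓝 0) := by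
  rw [tendsto_zero_iff_norm_tendsto_zero]
  simpa [Real.sqrt_sq (norm_nonneg _)] using h.tendsto_atTop_zero.sqrt

section LeastSquares

variable {n m : ℕ} {r : EuclideanSpace ℝ (Fin n) → EuclideanSpace ℝ (Fin m)}

theorem nlsObj_nonneg (v : EuclideanSpace ℝ (Fin n)) : 0 ≤ nlsObj r v := by
  unfold nlsObj; positivity

theorem norm_nlsJ_le {Lr : ℝ} (hLr : 0 ≤ Lr) (hA2 : ∀ v w, ‖r v - r w‖ ≤ Lr * ‖v - w‖)
    (v : EuclideanSpace ℝ (Fin n)) : ‖nlsJ r v‖ ≤ Lr :=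
  norm_fderiv_le_of_lip' ℝ hLr (Eventually.of_forall fun w => hA2 w v)

theorem nlsObj_le_add_inner_add_sq (hr : Differentiable ℝ r) {ω Lr LJ : ℝ} (hω : 0 ≤ ω)
    (hA1 : ∀ v, ‖r v‖ ≤ ω) (hA2 : ∀ v w, ‖r v - r w‖ ≤ Lr * ‖v - w‖) (hLJ : 0 ≤ LJ)
    (hA3 : ∀ v w, ‖nlsJ r v - nlsJ r w‖ ≤ LJ * ‖v - w‖) (v w : EuclideanSpace ℝ (Fin n)) :
    nlsObj r w ≤ nlsObj r v + ⟪w - v, nlsGrad r v⟫ + (ω * LJ + Lr ^ 2 / 2) * ‖w - v‖ ^ 2 := by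
  set e := r w - r v - nlsJ r v (w - v)
  have hexpand : ‖r w‖ ^ 2 = ‖r v‖ ^ 2 + 2 * ⟪r v, r w - r v⟫ + ‖r w - r v‖ ^ 2 := by
    simpa using norm_add_sq_real (r v) (r w - r v)
  have hlinear : ⟪r v, r w - r v⟫ = ⟪w - v, nlsGrad r v⟫ + ⟪r v, e⟫ := by
    rw [nlsGrad, adjoint_inner_right, real_inner_comm (r v), ← inner_add_right, add_sub_cancel]
  have hremainder : ⟪r v, e⟫ ≤ ω * (LJ * ‖w - v‖ ^ 2) :=
    (real_inner_le_norm _ _).trans <| mul_le_mul (hA1 v)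
      (norm_sub_sub_fderiv_le_of_lipschitz_fderiv hr hLJ hA3 v w) (norm_nonneg _) hω
  have hquadratic : ‖r w - r v‖ ^ 2 ≤ Lr ^ 2 * ‖w - v‖ ^ 2 := by
    rw [← mul_pow]; exact pow_le_pow_left₀ (norm_nonneg _) (hA2 w v) 2
  simp only [nlsObj]
  linarith

end LeastSquares

theorem gauss_newton_backtracking_armijo_global_convergence_general
    {n m : ℕ}
    (r : EuclideanSpace ℝ (Fin n) → EuclideanSpace ℝ (Fin m))
    (hr : ContDiff ℝ 1 r)
    -- (A1)
    (ω : ℝ) (hω : 0 < ω) (hA1 : ∀ v, ‖r v‖ ≤ ω)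
    -- (A2)
    (Lr : ℝ) (hLr : 0 < Lr) (hA2 : ∀ v w, ‖r v - r w‖ ≤ Lr * ‖v - w‖)
    -- (A3)
    (LJ : ℝ) (hLJ : 0 < LJ) (hA3 : ∀ v w, ‖nlsJ r v - nlsJ r w‖ ≤ LJ * ‖v - w‖)
    -- (A4)
    (ν : ℝ) (hν : 0 < ν) (hA4 : ∀ v z, ν * ‖z‖ ≤ ‖nlsJ r v z‖)
    -- algorithm parameters
    (β τ α₀ : ℝ) (hβ : β ∈ Set.Ioo (0 : ℝ) 1) (hτ : τ ∈ Set.Ioo (0 : ℝ) 1) (hα₀ : 0 < α₀)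
    -- iterates
    (v s : ℕ → EuclideanSpace ℝ (Fin n)) (α : ℕ → ℝ)
    -- (i) Gauss–Newton step: J(v_k)ᵀ J(v_k) s_k = −J(v_k)ᵀ r(v_k)
    (hstep : ∀ k, ContinuousLinearMap.adjoint (nlsJ r (v k)) (nlsJ r (v k) (s k)) =
      -ContinuousLinearMap.adjoint (nlsJ r (v k)) (r (v k)))
    -- (ii) stepsize bounds and Armijo condition
    (hαpos : ∀ k, 0 < α k)
    (harmijo : ∀ k, nlsObj r (v k + α k • s k) ≤
      nlsObj r (v k) + β * α k * ⟪s k, nlsGrad r (v k)⟫)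
    -- (iii) backtracking: either α_k = α₀ or the Armijo condition fails at α_k/τ
    (hback : ∀ k, α k = α₀ ∨
      ¬ (nlsObj r (v k + (α k / τ) • s k) ≤
        nlsObj r (v k) + β * (α k / τ) * ⟪s k, nlsGrad r (v k)⟫))
    -- (iv) iterate update
    (hupdate : ∀ k, v (k + 1) = v k + α k • s k) :
    Filter.Tendsto (fun k => nlsGrad r (v k)) Filter.atTop (nhds 0) := by
  obtain ⟨hβ0, hβ1⟩ := hβ
  have hdesc :=
    nlsObj_le_add_inner_add_sq (hr.differentiable one_ne_zero) hω.le hA1 hA2 hLJ.le hA3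
  have hinner k : ⟪s k, nlsGrad r (v k)⟫ = -‖nlsJ r (v k) (s k)‖ ^ 2 :=
    inner_adjoint_apply_of_normal_eq (hstep k)
  have hcurv k : ν ^ 2 * ‖s k‖ ^ 2 ≤ -⟪s k, nlsGrad r (v k)⟫ := by
    rw [hinner k, neg_neg, ← mul_pow]
    exact pow_le_pow_left₀ (by positivity) (hA4 _ _) 2
  have hangle k : (Lr ^ 2)⁻¹ * ‖nlsGrad r (v k)‖ ^ 2 ≤ -⟪s k, nlsGrad r (v k)⟫ := by
    rw [hinner k, neg_neg, inv_mul_le_iff₀ (by positivity), ← mul_pow]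
    refine pow_le_pow_left₀ (norm_nonneg _)
      ((norm_adjoint_apply_le_of_normal_eq (hstep k)).trans ?_) 2
    gcongr
    exact norm_nlsJ_le hLr.le hA2 _
  obtain ⟨αmin, hαmin, hαmin_le⟩ : ∃ αmin > 0, ∀ k, αmin ≤ α k :=
    ⟨_, lt_min hα₀ (by have := sub_pos.2 hβ1; have := hτ.1; positivity), fun k =>
      min_le_of_backtracking (hdesc (v k)) (hcurv k) hβ1 (by positivity) hτ.1 (hαpos k) (hback k)⟩
  have hdecrease k := hupdate k ▸ add_mul_norm_sq_le_of_armijo (harmijo k) hβ0.le hαmin.le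
    (hαmin_le k) (by positivity) (hangle k)
  have hsum := summable_of_add_le (fun k => nlsObj_nonneg (v k)) (fun k => by positivity) hdecrease
  exact tendsto_zero_of_summable_norm_sq ((summable_mul_left_iff (by positivity)).1 hsum)

/-- Theorem A.1: global convergence of Gauss–Newton with backtracking-Armijo line search. -/
theorem gauss_newton_backtracking_armijo_global_convergence
    {n m : ℕ} (hn : 0 < n) (hm : 0 < m)
    (r : EuclideanSpace ℝ (Fin n) → EuclideanSpace ℝ (Fin m))
    (hr : ContDiff ℝ 1 r)
    -- (A1)
    (ω : ℝ) (hω : 0 < ω) (hA1 : ∀ v, ‖r v‖ ≤ ω)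
    -- (A2)
    (Lr : ℝ) (hLr : 0 < Lr) (hA2 : ∀ v w, ‖r v - r w‖ ≤ Lr * ‖v - w‖)
    -- (A3)
    (LJ : ℝ) (hLJ : 0 < LJ) (hA3 : ∀ v w, ‖nlsJ r v - nlsJ r w‖ ≤ LJ * ‖v - w‖)
    -- (A4)
    (ν : ℝ) (hν : 0 < ν) (hA4 : ∀ v z, ν * ‖z‖ ≤ ‖nlsJ r v z‖)
    -- algorithm parameters
    (β τ α₀ : ℝ) (hβ : β ∈ Set.Ioo (0 : ℝ) 1) (hτ : τ ∈ Set.Ioo (0 : ℝ) 1) (hα₀ : 0 < α₀)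
    -- iterates
    (v s : ℕ → EuclideanSpace ℝ (Fin n)) (α : ℕ → ℝ)
    -- (i) Gauss–Newton step: J(v_k)ᵀ J(v_k) s_k = −J(v_k)ᵀ r(v_k)
    (hstep : ∀ k, ContinuousLinearMap.adjoint (nlsJ r (v k)) (nlsJ r (v k) (s k)) =
      -ContinuousLinearMap.adjoint (nlsJ r (v k)) (r (v k)))
    -- (ii) stepsize bounds and Armijo condition
    (hαpos : ∀ k, 0 < α k) (hαle : ∀ k, α k ≤ α₀)
    (harmijo : ∀ k, nlsObj r (v k + α k • s k) ≤
      nlsObj r (v k) + β * α k * ⟪s k, nlsGrad r (v k)⟫)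
    -- (iii) backtracking: either α_k = α₀ or the Armijo condition fails at α_k/τ
    (hback : ∀ k, α k = α₀ ∨
      ¬ (nlsObj r (v k + (α k / τ) • s k) ≤
        nlsObj r (v k) + β * (α k / τ) * ⟪s k, nlsGrad r (v k)⟫))
    -- (iv) iterate update
    (hupdate : ∀ k, v (k + 1) = v k + α k • s k) :
    Filter.Tendsto (fun k => nlsGrad r (v k)) Filter.atTop (nhds 0) :=
  gauss_newton_backtracking_armijo_global_convergence_general r hr ω hω hA1 Lr hLr hA2 LJ hLJ hA3 ν
    hν hA4 β τ α₀ hβ hτ hα₀ v s α hstep hαpos harmijo hback hupdate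
end

section
/- Lower bound on the backtracking-Armijo stepsize: let f : ℝ^n → ℝ be differentiable with ∇f Lipschitz continuous with constant L > 0, let v, s ∈ ℝ^n with sᵀ∇f(v) < 0, let β, τ ∈ (0,1) and α₀ > 0. Suppose α > 0 satisfies the Armijo condition f(v + αs) ≤ f(v) + β·α·(sᵀ∇f(v)), and either α = α₀ or the Armijo condition fails at stepsize α/τ. Then α ≥ min{ α₀, 2τ(1−β)·(−sᵀ∇f(v)) / (L‖s‖²) }. -/
open scoped RealInnerProductSpace

/-!
Along the ray `t ↦ v + t • s` the derivative of `f` is `⟪∇f(v + t • s), s⟫`, which the Lipschitz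
bound keeps within `L‖s‖²t` of its value at `t = 0`; integrating gives the descent estimate
`f(v + t • s) ≤ f v + t⟪s, ∇f v⟫ + L‖s‖²t²/2`. Its right-hand side lies below the Armijo line
`f v + βt⟪s, ∇f v⟫` as soon as `L‖s‖²t ≤ 2(1 - β)(-⟪s, ∇f v⟫)`. So if the Armijo condition fails
at `α / τ`, that step exceeds `2(1 - β)(-⟪s, ∇f v⟫) / (L‖s‖²)`; otherwise `α = α₀`.
-/

variable {E : Type*} [NormedAddCommGroup E] [InnerProductSpace ℝ E] [CompleteSpace E]

def ArmijoCondition (f : E → ℝ) (β : ℝ) (v s : E) (α : ℝ) : Prop :=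
  f (v + α • s) ≤ f v + β * α * ⟪s, gradient f v⟫

section Descent

variable {f : E → ℝ} {v s : E} {L t : ℝ}

theorem hasDerivAt_comp_add_smul (hf : Differentiable ℝ f) (v s : E) (t : ℝ) :
    HasDerivAt (fun t : ℝ => f (v + t • s)) ⟪gradient f (v + t • s), s⟫ t := by
  have hline : HasDerivAt (fun t : ℝ => v + t • s) s t := by
    simpa using ((hasDerivAt_id t).smul_const s).const_add v
  simpa [Function.comp_def] using
    (hasGradientAt_iff_hasFDerivAt.mp (hf _).hasGradientAt).comp_hasDerivAt t hline

theorem inner_gradient_add_smul_sub_le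
    (hlip : ∀ w, ‖gradient f w - gradient f v‖ ≤ L * ‖w - v‖) (ht : 0 ≤ t) :
    ⟪gradient f (v + t • s) - gradient f v, s⟫ ≤ L * ‖s‖ ^ 2 * t :=
  calc _ ≤ ‖gradient f (v + t • s) - gradient f v‖ * ‖s‖ := real_inner_le_norm _ _
    _ ≤ L * ‖v + t • s - v‖ * ‖s‖ := by gcongr; exact hlip _
    _ = L * ‖s‖ ^ 2 * t := by
      rw [add_sub_cancel_left, norm_smul, Real.norm_of_nonneg ht]; ring

theorem apply_add_smul_le_of_gradient_lipschitz (hf : Differentiable ℝ f)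
    (hlip : ∀ w, ‖gradient f w - gradient f v‖ ≤ L * ‖w - v‖) (ht : 0 ≤ t) :
    f (v + t • s) ≤ f v + t * ⟪s, gradient f v⟫ + L * ‖s‖ ^ 2 * t ^ 2 / 2 := by
  have hφ : ∀ u, HasDerivAt (fun u => f (v + u • s) - u * ⟪s, gradient f v⟫)
      (⟪gradient f (v + u • s), s⟫ - ⟪s, gradient f v⟫) u := fun u =>
    (hasDerivAt_comp_add_smul hf v s u).sub (hasDerivAt_mul_const _)
  have hB : ∀ u, HasDerivAt (fun u => f v + L * ‖s‖ ^ 2 * u ^ 2 / 2) (L * ‖s‖ ^ 2 * u) u :=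
    fun u => ((((hasDerivAt_pow 2 u).const_mul (L * ‖s‖ ^ 2)).div_const 2).const_add
      (f v)).congr_deriv (by norm_num; ring)
  have hbound := image_le_of_deriv_right_le_deriv_boundary (a := 0) (b := t)
    (fun u _ => (hφ u).continuousAt.continuousWithinAt)
    (fun u _ => (hφ u).hasDerivWithinAt) (by simp)
    (fun u _ => (hB u).continuousAt.continuousWithinAt) (fun u _ => (hB u).hasDerivWithinAt)
    (fun u hu => by
      rw [real_inner_comm (gradient f v), ← inner_sub_left]
      exact inner_gradient_add_smul_sub_le hlip hu.1)
    ⟨ht, le_rfl⟩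
  linarith

theorem armijoCondition_of_le (hf : Differentiable ℝ f)
    (hlip : ∀ w, ‖gradient f w - gradient f v‖ ≤ L * ‖w - v‖) {β : ℝ} (ht : 0 ≤ t)
    (hle : L * ‖s‖ ^ 2 * t ≤ 2 * (1 - β) * -⟪s, gradient f v⟫) :
    ArmijoCondition f β v s t := by
  have hdescent := apply_add_smul_le_of_gradient_lipschitz (s := s) hf hlip ht
  have hscaled := mul_le_mul_of_nonneg_left hle ht
  unfold ArmijoCondition
  linarith

end Descent

theorem backtracking_armijo_stepsize_lower_bound_general
    {n : ℕ} (f : EuclideanSpace ℝ (Fin n) → ℝ)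
    (hf : Differentiable ℝ f)
    (L : ℝ) (hL : 0 < L)
    (hlip : ∀ v w, ‖gradient f v - gradient f w‖ ≤ L * ‖v - w‖)
    (v s : EuclideanSpace ℝ (Fin n))
    (hdesc : ⟪s, gradient f v⟫ < 0)
    (β τ : ℝ) (hτ : τ ∈ Set.Ioo (0 : ℝ) 1)
    (α₀ : ℝ)
    (α : ℝ) (hαpos : 0 < α)
    -- and either α = α₀ or the Armijo condition fails at stepsize α/τ
    (hback : α = α₀ ∨
      ¬ (f (v + (α / τ) • s) ≤ f v + β * (α / τ) * ⟪s, gradient f v⟫)) :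
    min α₀ (2 * τ * (1 - β) * (-⟪s, gradient f v⟫) / (L * ‖s‖ ^ 2)) ≤ α := by
  rcases hback with rfl | hfail
  · exact min_le_left _ _
  have hτ₀ : 0 < τ := hτ.1
  have hs : 0 < ‖s‖ := norm_pos_iff.mpr (by rintro rfl; simp at hdesc)
  have hlt : 2 * (1 - β) * -⟪s, gradient f v⟫ < L * ‖s‖ ^ 2 * α / τ := by
    by_contra! hle
    rw [mul_div_assoc] at hle
    exact hfail (armijoCondition_of_le hf (fun w => hlip w v) (by positivity) hle)
  rw [lt_div_iff₀ hτ₀] at hlt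
  refine (min_le_right _ _).trans ?_
  rw [div_le_iff₀ (by positivity)]
  linarith

/-- Lower bound on the backtracking-Armijo stepsize. -/
theorem backtracking_armijo_stepsize_lower_bound
    {n : ℕ} (f : EuclideanSpace ℝ (Fin n) → ℝ)
    (hf : Differentiable ℝ f)
    (L : ℝ) (hL : 0 < L)
    (hlip : ∀ v w, ‖gradient f v - gradient f w‖ ≤ L * ‖v - w‖)
    (v s : EuclideanSpace ℝ (Fin n))
    (hdesc : ⟪s, gradient f v⟫ < 0)
    (β τ : ℝ) (hβ : β ∈ Set.Ioo (0 : ℝ) 1) (hτ : τ ∈ Set.Ioo (0 : ℝ) 1)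
    (α₀ : ℝ) (hα₀ : 0 < α₀)
    (α : ℝ) (hαpos : 0 < α)
    -- the Armijo condition holds at stepsize α
    (harmijo : f (v + α • s) ≤ f v + β * α * ⟪s, gradient f v⟫)
    -- and either α = α₀ or the Armijo condition fails at stepsize α/τ
    (hback : α = α₀ ∨
      ¬ (f (v + (α / τ) • s) ≤ f v + β * (α / τ) * ⟪s, gradient f v⟫)) :
    min α₀ (2 * τ * (1 - β) * (-⟪s, gradient f v⟫) / (L * ‖s‖ ^ 2)) ≤ α :=
  backtracking_armijo_stepsize_lower_bound_general f hf L hL hlip v s hdesc β τ hτ α₀ α hαpos hback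
end

section
/- Uniform angle bound for the Gauss–Newton direction: assume (A2) and (A4), fix v ∈ ℝ^n with ∇𝒥(v) ≠ 0, and let s be the (unique) solution of J(v)ᵀJ(v) s = −J(v)ᵀ r(v). Then −sᵀ∇𝒥(v) ≥ (ν²/L_r²) · ‖∇𝒥(v)‖ · ‖s‖; that is, the cosine of the angle between s and the steepest-descent direction −∇𝒥(v) is bounded below by ν²/L_r². -/
open scoped RealInnerProductSpace

/-- Uniform angle bound for the Gauss–Newton direction:
`−sᵀ∇𝒥(v) ≥ (ν²/L_r²)‖∇𝒥(v)‖‖s‖`. -/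
theorem gauss_newton_uniform_angle_bound
    {n m : ℕ} (hn : 0 < n) (hm : 0 < m)
    (r : EuclideanSpace ℝ (Fin n) → EuclideanSpace ℝ (Fin m))
    (hr : ContDiff ℝ 1 r)
    -- (A2)
    (Lr : ℝ) (hLr : 0 < Lr) (hA2 : ∀ v w, ‖r v - r w‖ ≤ Lr * ‖v - w‖)
    -- (A4)
    (ν : ℝ) (hν : 0 < ν) (hA4 : ∀ v z, ν * ‖z‖ ≤ ‖nlsJ r v z‖)
    (v : EuclideanSpace ℝ (Fin n)) (hgrad : nlsGrad r v ≠ 0)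
    (s : EuclideanSpace ℝ (Fin n))
    (hstep : ContinuousLinearMap.adjoint (nlsJ r v) (nlsJ r v s) =
      -ContinuousLinearMap.adjoint (nlsJ r v) (r v)) :
    (ν ^ 2 / Lr ^ 2) * ‖nlsGrad r v‖ * ‖s‖ ≤ -⟪s, nlsGrad r v⟫ := by
  simp only [nlsGrad, nlsJ] at hstep hA4 ⊢
  set J := fderiv ℝ r v with hJ
  have hlip : LipschitzWith Lr.toNNReal r := by
    refine LipschitzWith.of_dist_le_mul fun x y => ?_
    rw [dist_eq_norm, dist_eq_norm]
    simpa [Real.coe_toNNReal _ hLr.le] using hA2 x y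
  have hJnorm : ‖J‖ ≤ Lr := by
    have := norm_fderiv_le_of_lipschitz ℝ hlip (x₀ := v)
    simpa [Real.coe_toNNReal _ hLr.le, hJ] using this
  -- -⟪s, g⟫ = ‖J s‖²
  have key : -⟪s, ContinuousLinearMap.adjoint J (r v)⟫ = ‖J s‖ ^ 2 := by
    have h1 : ⟪s, ContinuousLinearMap.adjoint J (r v)⟫
        = -⟪s, ContinuousLinearMap.adjoint J (J s)⟫ := by
      rw [hstep]; simp
    rw [h1, neg_neg, ContinuousLinearMap.adjoint_inner_right]
    rw [real_inner_self_eq_norm_sq]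
  rw [key]
  have hJs : ν * ‖s‖ ≤ ‖J s‖ := hA4 v s
  have hg : ‖ContinuousLinearMap.adjoint J (r v)‖ ≤ Lr * ‖J s‖ := by
    have : ContinuousLinearMap.adjoint J (r v) = -(ContinuousLinearMap.adjoint J (J s)) := by
      rw [hstep]; simp
    rw [this, norm_neg]
    calc ‖ContinuousLinearMap.adjoint J (J s)‖ ≤ ‖ContinuousLinearMap.adjoint J‖ * ‖J s‖ :=
          (ContinuousLinearMap.adjoint J).le_opNorm _
      _ ≤ Lr * ‖J s‖ := by
          gcongr
          calc ‖ContinuousLinearMap.adjoint J‖ = ‖J‖ := LinearIsometryEquiv.norm_map _ J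
            _ ≤ Lr := hJnorm
  have hνLr : ν ≤ Lr := by
    obtain ⟨i⟩ : Nonempty (Fin n) := ⟨⟨0, hn⟩⟩
    have hz : ‖(EuclideanSpace.single i (1:ℝ) : EuclideanSpace ℝ (Fin n))‖ = 1 := by simp
    have h1 := hA4 v (EuclideanSpace.single i 1)
    have h2 := J.le_opNorm (EuclideanSpace.single i 1)
    rw [hz] at h1 h2
    simpa using h1.trans (h2.trans (by simpa using hJnorm))
  have hs : ‖s‖ ≥ 0 := norm_nonneg _
  have hJs0 : ‖J s‖ ≥ 0 := norm_nonneg _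
  rw [div_mul_eq_mul_div, div_mul_eq_mul_div, div_le_iff₀ (by positivity)]
  have h1 : ‖ContinuousLinearMap.adjoint J (r v)‖ * (ν * ‖s‖) ≤ (Lr * ‖J s‖) * ‖J s‖ :=
    mul_le_mul hg hJs (by positivity) (by positivity)
  nlinarith [mul_le_mul_of_nonneg_left h1 hν.le,
    mul_le_mul_of_nonneg_right hνLr (by positivity : (0:ℝ) ≤ Lr * ‖J s‖ * ‖J s‖)]
end

section
/- Lower bound on the predicted model decrease: assume (A2), fix v ∈ ℝ^n and γ > 0, define the local model m(s) = (1/2)‖J(v)s + r(v)‖² + (γ/2)‖s‖², and let s solve (J(v)ᵀJ(v) + γI) s = −J(v)ᵀ r(v). Then 𝒥(v) − m(s) ≥ ‖∇𝒥(v)‖² / (2(L_r² + γ)). -/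
open scoped RealInnerProductSpace

open scoped InnerProduct

/-!
The step solves the normal equations `(A†A + γI) s = -A†b` with `A = J(v)`, `b = r(v)`.
Pairing them with `s` gives `⟪As, b⟫ = -(‖As‖² + γ‖s‖²)`, so the model decrease
`½‖b‖² - m(s)` equals `½(‖As‖² + γ‖s‖²)`. On the other hand `A†b = -(A†(As) + γs)` has norm at
most `L‖As‖ + γ‖s‖`, where `‖A‖ ≤ L` because `r` is `L`-Lipschitz, and Cauchy–Schwarz in the form
`(L a + √γ · √γ b)² ≤ (L² + γ)(a² + γ b²)` compares the two.
-/

lemma sq_mul_add_mul_le_mul {L γ a b : ℝ} (hγ : 0 ≤ γ) :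
    (L * a + γ * b) ^ 2 ≤ (L ^ 2 + γ) * (a ^ 2 + γ * b ^ 2) := by
  nlinarith [mul_nonneg hγ (sq_nonneg (L * b - a))]

section RegularisedNormalEquation

variable {E F : Type*} [NormedAddCommGroup E] [InnerProductSpace ℝ E] [CompleteSpace E]
  [NormedAddCommGroup F] [InnerProductSpace ℝ F] [CompleteSpace F]
  {A : E →L[ℝ] F} {b : F} {γ : ℝ} {s : E}

lemma inner_apply_eq_of_regularised_normal_eq (hs : (A†) (A s) + γ • s = -(A†) b) :
    ⟪A s, b⟫ = -(‖A s‖ ^ 2 + γ * ‖s‖ ^ 2) := by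
  have h := congrArg (⟪s, ·⟫) hs
  simp only [inner_add_right, inner_neg_right, ContinuousLinearMap.adjoint_inner_right,
    real_inner_smul_right, real_inner_self_eq_norm_sq] at h
  linarith

lemma model_decrease_eq_of_regularised_normal_eq (hs : (A†) (A s) + γ • s = -(A†) b) :
    1 / 2 * ‖b‖ ^ 2 - (1 / 2 * ‖A s + b‖ ^ 2 + γ / 2 * ‖s‖ ^ 2)
      = 1 / 2 * (‖A s‖ ^ 2 + γ * ‖s‖ ^ 2) := by
  rw [norm_add_sq_real, inner_apply_eq_of_regularised_normal_eq hs]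
  ring

lemma norm_adjoint_apply_le_of_regularised_normal_eq (hγ : 0 ≤ γ)
    (hs : (A†) (A s) + γ • s = -(A†) b) : ‖(A†) b‖ ≤ ‖A‖ * ‖A s‖ + γ * ‖s‖ := by
  have hb : (A†) b = -((A†) (A s) + γ • s) := by rw [hs, neg_neg]
  calc ‖(A†) b‖ = ‖(A†) (A s) + γ • s‖ := by rw [hb, norm_neg]
    _ ≤ ‖(A†) (A s)‖ + ‖γ • s‖ := norm_add_le _ _
    _ ≤ ‖A†‖ * ‖A s‖ + γ * ‖s‖ := by
      rw [norm_smul, Real.norm_of_nonneg hγ]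
      gcongr
      exact (A†).le_opNorm _
    _ = ‖A‖ * ‖A s‖ + γ * ‖s‖ := by rw [LinearIsometryEquiv.norm_map]

theorem sq_norm_adjoint_apply_div_le_model_decrease {L : ℝ} (hA : ‖A‖ ≤ L) (hγ : 0 < γ)
    (hs : (A†) (A s) + γ • s = -(A†) b) :
    ‖(A†) b‖ ^ 2 / (2 * (L ^ 2 + γ))
      ≤ 1 / 2 * ‖b‖ ^ 2 - (1 / 2 * ‖A s + b‖ ^ 2 + γ / 2 * ‖s‖ ^ 2) := by
  have hL : 0 ≤ L := (norm_nonneg A).trans hA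
  have hgrad : ‖(A†) b‖ ≤ L * ‖A s‖ + γ * ‖s‖ :=
    (norm_adjoint_apply_le_of_regularised_normal_eq hγ.le hs).trans (by gcongr)
  rw [model_decrease_eq_of_regularised_normal_eq hs, div_le_iff₀ (by positivity)]
  calc ‖(A†) b‖ ^ 2 ≤ (L * ‖A s‖ + γ * ‖s‖) ^ 2 := by gcongr
    _ ≤ (L ^ 2 + γ) * (‖A s‖ ^ 2 + γ * ‖s‖ ^ 2) := sq_mul_add_mul_le_mul hγ.le
    _ = 1 / 2 * (‖A s‖ ^ 2 + γ * ‖s‖ ^ 2) * (2 * (L ^ 2 + γ)) := by ring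

end RegularisedNormalEquation

lemma norm_fderiv_le_of_norm_sub_le {E F : Type*} [NormedAddCommGroup E] [NormedSpace ℝ E]
    [NormedAddCommGroup F] [NormedSpace ℝ F] {f : E → F} {L : ℝ} (hL : 0 ≤ L)
    (hf : ∀ x y, ‖f x - f y‖ ≤ L * ‖x - y‖) (x : E) : ‖fderiv ℝ f x‖ ≤ L := by
  have hlip : LipschitzWith (Real.toNNReal L) f :=
    LipschitzWith.of_dist_le' fun x y => by simpa only [dist_eq_norm] using hf x y
  simpa only [Real.coe_toNNReal L hL] using norm_fderiv_le_of_lipschitz ℝ (x₀ := x) hlip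

theorem regularised_gauss_newton_model_decrease_lower_bound_general
    {n m : ℕ}
    (r : EuclideanSpace ℝ (Fin n) → EuclideanSpace ℝ (Fin m))
    -- (A2)
    (Lr : ℝ) (hLr : 0 < Lr) (hA2 : ∀ v w, ‖r v - r w‖ ≤ Lr * ‖v - w‖)
    (v : EuclideanSpace ℝ (Fin n)) (γ : ℝ) (hγ : 0 < γ)
    (s : EuclideanSpace ℝ (Fin n))
    (hstep : ContinuousLinearMap.adjoint (nlsJ r v) (nlsJ r v s) + γ • s =
      -ContinuousLinearMap.adjoint (nlsJ r v) (r v))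
    -- the local model m(s) = (1/2)‖J(v)s + r(v)‖² + (γ/2)‖s‖²
    (mdl : EuclideanSpace ℝ (Fin n) → ℝ)
    (hmdl : ∀ sv, mdl sv = (1 / 2) * ‖nlsJ r v sv + r v‖ ^ 2 + (γ / 2) * ‖sv‖ ^ 2) :
    ‖nlsGrad r v‖ ^ 2 / (2 * (Lr ^ 2 + γ)) ≤ nlsObj r v - mdl s := by
  rw [hmdl s, nlsObj, nlsGrad]
  exact sq_norm_adjoint_apply_div_le_model_decrease
    (norm_fderiv_le_of_norm_sub_le hLr.le hA2 v) hγ hstep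

/-- Lower bound on the predicted model decrease:
`𝒥(v) − m(s) ≥ ‖∇𝒥(v)‖² / (2(L_r² + γ))`. -/
theorem regularised_gauss_newton_model_decrease_lower_bound
    {n m : ℕ} (hn : 0 < n) (hm : 0 < m)
    (r : EuclideanSpace ℝ (Fin n) → EuclideanSpace ℝ (Fin m))
    (hr : ContDiff ℝ 1 r)
    -- (A2)
    (Lr : ℝ) (hLr : 0 < Lr) (hA2 : ∀ v w, ‖r v - r w‖ ≤ Lr * ‖v - w‖)
    (v : EuclideanSpace ℝ (Fin n)) (γ : ℝ) (hγ : 0 < γ)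
    (s : EuclideanSpace ℝ (Fin n))
    (hstep : ContinuousLinearMap.adjoint (nlsJ r v) (nlsJ r v s) + γ • s =
      -ContinuousLinearMap.adjoint (nlsJ r v) (r v))
    -- the local model m(s) = (1/2)‖J(v)s + r(v)‖² + (γ/2)‖s‖²
    (mdl : EuclideanSpace ℝ (Fin n) → ℝ)
    (hmdl : ∀ sv, mdl sv = (1 / 2) * ‖nlsJ r v sv + r v‖ ^ 2 + (γ / 2) * ‖sv‖ ^ 2) :
    ‖nlsGrad r v‖ ^ 2 / (2 * (Lr ^ 2 + γ)) ≤ nlsObj r v - mdl s :=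
  regularised_gauss_newton_model_decrease_lower_bound_general r Lr hLr hA2 v γ hγ s hstep mdl hmdl
end

section
/- Uniform upper bound on the regularisation parameter in the REG algorithm: suppose ∇𝒥 is Lipschitz continuous with constant L > 0, let 0 < η₁ ≤ η₂ < 1 and γ₀ > 0, and let (v_k), (γ_k), (s_k) be generated by the REG algorithm: (J(v_k)ᵀJ(v_k) + γ_k I) s_k = −J(v_k)ᵀ r(v_k); ρ_k = (𝒥(v_k) − 𝒥(v_k + s_k)) / (𝒥(v_k) − m_k(s_k)) with m_k(s) = (1/2)‖J(v_k)s + r(v_k)‖² + (γ_k/2)‖s‖²; v_{k+1} = v_k + s_k if ρ_k ≥ η₁ and v_{k+1} = v_k otherwise; γ_{k+1} = γ_k/2 if ρ_k ≥ η₂, γ_{k+1} = γ_k if η₁ ≤ ρ_k < η₂, and γ_{k+1} = 2γ_k otherwise. If ∇𝒥(v_k) ≠ 0 for all k, then γ_k ≤ max{ γ₀, 2L/(2 − η₂) } for every k. -/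
open scoped RealInnerProductSpace

open ContinuousLinearMap NNReal

/-! The regularisation parameter can only grow by doubling, and doubling happens only below
`L / (2 - η₂)`: above that threshold the quadratic upper bound `𝒥(v + s) ≤ 𝒥(v) + ⟪∇𝒥(v), s⟫ +
(L/2)‖s‖²` given by the Lipschitz gradient, combined with the normal equations of the step, forces
`ρ ≥ η₂`. -/

theorem le_add_inner_add_of_lipschitzWith_gradient {E : Type*} [NormedAddCommGroup E]
    [InnerProductSpace ℝ E] {f : E → ℝ} {g : E → E} {K : ℝ≥0}
    (hf : ∀ x, HasFDerivAt f (innerSL ℝ (g x)) x) (hg : LipschitzWith K g) (x s : E) :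
    f (x + s) ≤ f x + ⟪g x, s⟫ + K / 2 * ‖s‖ ^ 2 := by
  set φ : ℝ → ℝ := fun t => f (x + t • s) - t * ⟪g x, s⟫ - K / 2 * t ^ 2 * ‖s‖ ^ 2
  set φ' : ℝ → ℝ := fun t => ⟪g (x + t • s) - g x, s⟫ - K * t * ‖s‖ ^ 2
  have hφ : ∀ t, HasDerivAt φ (φ' t) t := by
    intro t
    have hline : HasDerivAt (fun t : ℝ => x + t • s) s t := by
      simpa using ((hasDerivAt_id t).smul_const s).const_add x
    have := (((hf _).comp_hasDerivAt t hline).sub ((hasDerivAt_id t).mul_const ⟪g x, s⟫)).sub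
      (((hasDerivAt_pow 2 t).const_mul (K / 2 : ℝ)).mul_const (‖s‖ ^ 2))
    refine this.congr_deriv ?_
    simp only [φ', innerSL_apply_apply, inner_sub_left]
    ring
  have hφ'_nonpos : ∀ t, 0 ≤ t → φ' t ≤ 0 := by
    intro t ht
    have hlip : ‖g (x + t • s) - g x‖ ≤ K * (t * ‖s‖) := by
      simpa [norm_smul, abs_of_nonneg ht] using hg.norm_sub_le (x + t • s) x
    have := (real_inner_le_norm (g (x + t • s) - g x) s).trans
      (mul_le_mul_of_nonneg_right hlip (norm_nonneg s))
    simp only [φ']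
    linarith
  have hanti : AntitoneOn φ (Set.Ici 0) :=
    antitoneOn_of_hasDerivWithinAt_nonpos (convex_Ici 0)
      (fun t _ => (hφ t).continuousAt.continuousWithinAt) (fun t _ => (hφ t).hasDerivWithinAt)
      (fun t ht => hφ'_nonpos t (le_of_lt (by simpa using ht)))
  have hφ_one_le : φ 1 ≤ φ 0 := hanti Set.self_mem_Ici (Set.mem_Ici.2 zero_le_one) zero_le_one
  simp only [φ, one_smul, zero_smul, add_zero] at hφ_one_le
  linarith

theorem hasFDerivAt_half_norm_sq {E F : Type*} [NormedAddCommGroup E] [InnerProductSpace ℝ E]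
    [CompleteSpace E] [NormedAddCommGroup F] [InnerProductSpace ℝ F] [CompleteSpace F]
    {r : E → F} {J : E →L[ℝ] F} {x : E} (hr : HasFDerivAt r J x) :
    HasFDerivAt (fun v => 1 / 2 * ‖r v‖ ^ 2) (innerSL ℝ (adjoint J (r x))) x := by
  refine (hr.norm_sq.const_mul (1 / 2 : ℝ)).congr_fderiv ?_
  ext u
  simp [adjoint_inner_left]

section RegularisedStep

variable {E F : Type*} [NormedAddCommGroup E] [InnerProductSpace ℝ E] [CompleteSpace E]
  [NormedAddCommGroup F] [InnerProductSpace ℝ F] [CompleteSpace F]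
  {J : E →L[ℝ] F} {b : F} {γ : ℝ} {s : E}

theorem inner_adjoint_eq_of_regularised_step (hs : adjoint J (J s) + γ • s = -adjoint J b) :
    ⟪adjoint J b, s⟫ = -(‖J s‖ ^ 2 + γ * ‖s‖ ^ 2) := by
  have := congrArg (⟪·, s⟫) hs
  simp only [inner_add_left, real_inner_smul_left, inner_neg_left, adjoint_inner_left,
    real_inner_self_eq_norm_sq] at this
  rw [adjoint_inner_left]
  linarith

theorem half_norm_sq_sub_model_eq_of_regularised_step
    (hs : adjoint J (J s) + γ • s = -adjoint J b) :
    1 / 2 * ‖b‖ ^ 2 - (1 / 2 * ‖J s + b‖ ^ 2 + γ / 2 * ‖s‖ ^ 2) =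
      1 / 2 * ‖J s‖ ^ 2 + γ / 2 * ‖s‖ ^ 2 := by
  have hinner := inner_adjoint_eq_of_regularised_step hs
  rw [adjoint_inner_left, real_inner_comm] at hinner
  rw [norm_add_sq_real, hinner]
  ring

theorem regularised_step_ne_zero (hs : adjoint J (J s) + γ • s = -adjoint J b)
    (hb : adjoint J b ≠ 0) : s ≠ 0 := by
  rintro rfl
  simp only [map_zero, smul_zero, add_zero, zero_eq_neg] at hs
  exact hb hs

/-- The right-hand side is the ratio `ρ` of actual to predicted reduction. -/
theorem le_reduction_ratio_of_div_le {r : E → F} (hr : Differentiable ℝ r) {K : ℝ≥0} (hK : 0 < K)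
    (hlip : LipschitzWith K fun v => adjoint (fderiv ℝ r v) (r v)) {η : ℝ} (hη : η < 2)
    (hγ : K / (2 - η) ≤ γ) {x : E}
    (hs : adjoint (fderiv ℝ r x) (fderiv ℝ r x s) + γ • s = -adjoint (fderiv ℝ r x) (r x))
    (hgrad : adjoint (fderiv ℝ r x) (r x) ≠ 0) :
    η ≤ (1 / 2 * ‖r x‖ ^ 2 - 1 / 2 * ‖r (x + s)‖ ^ 2) /
      (1 / 2 * ‖r x‖ ^ 2 - (1 / 2 * ‖fderiv ℝ r x s + r x‖ ^ 2 + γ / 2 * ‖s‖ ^ 2)) := by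
  have h2η : 0 < 2 - η := by linarith
  have hKγ : K ≤ γ * (2 - η) := (div_le_iff₀ h2η).1 hγ
  have hγpos : 0 < γ := lt_of_lt_of_le (div_pos (NNReal.coe_pos.2 hK) h2η) hγ
  have hsq : 0 < ‖s‖ ^ 2 := by
    have := regularised_step_ne_zero hs hgrad
    positivity
  have hdesc := le_add_inner_add_of_lipschitzWith_gradient
    (fun v => hasFDerivAt_half_norm_sq (hr v).hasFDerivAt) hlip x s
  rw [inner_adjoint_eq_of_regularised_step hs] at hdesc
  rw [half_norm_sq_sub_model_eq_of_regularised_step hs, le_div_iff₀ (by positivity)]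
  nlinarith [mul_nonneg (sq_nonneg ‖fderiv ℝ r x s‖) h2η.le,
    mul_nonneg hsq.le (sub_nonneg.2 hKγ)]

end RegularisedStep

theorem le_max_of_halve_or_keep_or_double_below {γ : ℕ → ℝ} {T : ℝ} (hT : 0 ≤ T)
    (hγ : ∀ k, γ (k + 1) = γ k / 2 ∨ γ (k + 1) = γ k ∨ γ k < T ∧ γ (k + 1) = 2 * γ k) :
    ∀ k, γ k ≤ max (γ 0) (2 * T) := by
  intro k
  induction k with
  | zero => exact le_max_left _ _
  | succ k ih =>
    have hM := le_max_right (γ 0) (2 * T)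
    rcases hγ k with h | h | ⟨hlt, h⟩ <;> rw [h] <;> linarith

theorem regularisation_parameter_uniform_upper_bound_general
    {n m : ℕ}
    (r : EuclideanSpace ℝ (Fin n) → EuclideanSpace ℝ (Fin m))
    (hr : ContDiff ℝ 1 r)
    -- ∇𝒥 is Lipschitz continuous with constant L
    (L : ℝ) (hL : 0 < L)
    (hlip : ∀ v w, ‖nlsGrad r v - nlsGrad r w‖ ≤ L * ‖v - w‖)
    -- algorithm parameters: 0 < η₁ ≤ η₂ < 1, γ₀ > 0
    (η₁ η₂ γ₀ : ℝ) (hη₂ : η₂ < 1)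
    -- iterates of the REG algorithm
    (v s : ℕ → EuclideanSpace ℝ (Fin n)) (γ : ℕ → ℝ)
    (hγinit : γ 0 = γ₀)
    (hstep : ∀ k, ContinuousLinearMap.adjoint (nlsJ r (v k)) (nlsJ r (v k) (s k)) + γ k • s k =
      -ContinuousLinearMap.adjoint (nlsJ r (v k)) (r (v k)))
    (mdl : ℕ → EuclideanSpace ℝ (Fin n) → ℝ)
    (hmdl : ∀ k sv, mdl k sv =
      (1 / 2) * ‖nlsJ r (v k) sv + r (v k)‖ ^ 2 + (γ k / 2) * ‖sv‖ ^ 2)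
    (ρ : ℕ → ℝ)
    (hρ : ∀ k, ρ k = (nlsObj r (v k) - nlsObj r (v k + s k)) /
      (nlsObj r (v k) - mdl k (s k)))
    (hγvs : ∀ k, η₂ ≤ ρ k → γ (k + 1) = γ k / 2)
    (hγs : ∀ k, η₁ ≤ ρ k → ρ k < η₂ → γ (k + 1) = γ k)
    (hγu : ∀ k, ρ k < η₁ → γ (k + 1) = 2 * γ k)
    -- nonzero gradients along the iterates
    (hgrad : ∀ k, nlsGrad r (v k) ≠ 0) :
    ∀ k, γ k ≤ max γ₀ (2 * L / (2 - η₂)) := by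
  have h2η : 0 < 2 - η₂ := by linarith
  have hlipL : LipschitzWith ⟨L, hL.le⟩ (nlsGrad r) :=
    LipschitzWith.of_dist_le_mul fun v w => by
      rw [dist_eq_norm, dist_eq_norm]; exact hlip v w
  have hsuccess : ∀ k, L / (2 - η₂) ≤ γ k → η₂ ≤ ρ k := fun k hk => by
    rw [hρ k, hmdl]
    exact le_reduction_ratio_of_div_le (hr.differentiable one_ne_zero) (K := ⟨L, hL.le⟩) hL
      hlipL (by linarith) hk (hstep k) (hgrad k)
  have hupdate : ∀ k, γ (k + 1) = γ k / 2 ∨ γ (k + 1) = γ k ∨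
      γ k < L / (2 - η₂) ∧ γ (k + 1) = 2 * γ k := by
    intro k
    rcases le_or_gt η₂ (ρ k) with hvs | hlt₂
    · exact Or.inl (hγvs k hvs)
    rcases le_or_gt η₁ (ρ k) with hs | hu
    · exact Or.inr (Or.inl (hγs k hs hlt₂))
    · exact Or.inr (Or.inr ⟨lt_of_not_ge fun hk => (hsuccess k hk).not_gt hlt₂, hγu k hu⟩)
  intro k
  simpa [hγinit, mul_div_assoc] using
    le_max_of_halve_or_keep_or_double_below (div_nonneg hL.le h2η.le) hupdate k

/-- Uniform upper bound on the regularisation parameter in the REG algorithm: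
`γ_k ≤ max{γ₀, 2L/(2 − η₂)}` for every `k`. -/
theorem regularisation_parameter_uniform_upper_bound
    {n m : ℕ} (hn : 0 < n) (hm : 0 < m)
    (r : EuclideanSpace ℝ (Fin n) → EuclideanSpace ℝ (Fin m))
    (hr : ContDiff ℝ 1 r)
    -- ∇𝒥 is Lipschitz continuous with constant L
    (L : ℝ) (hL : 0 < L)
    (hlip : ∀ v w, ‖nlsGrad r v - nlsGrad r w‖ ≤ L * ‖v - w‖)
    -- algorithm parameters: 0 < η₁ ≤ η₂ < 1, γ₀ > 0
    (η₁ η₂ γ₀ : ℝ) (hη₁ : 0 < η₁) (hη₁₂ : η₁ ≤ η₂) (hη₂ : η₂ < 1) (hγ₀ : 0 < γ₀)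
    -- iterates of the REG algorithm
    (v s : ℕ → EuclideanSpace ℝ (Fin n)) (γ : ℕ → ℝ)
    (hγinit : γ 0 = γ₀)
    (hstep : ∀ k, ContinuousLinearMap.adjoint (nlsJ r (v k)) (nlsJ r (v k) (s k)) + γ k • s k =
      -ContinuousLinearMap.adjoint (nlsJ r (v k)) (r (v k)))
    (mdl : ℕ → EuclideanSpace ℝ (Fin n) → ℝ)
    (hmdl : ∀ k sv, mdl k sv =
      (1 / 2) * ‖nlsJ r (v k) sv + r (v k)‖ ^ 2 + (γ k / 2) * ‖sv‖ ^ 2)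
    (ρ : ℕ → ℝ)
    (hρ : ∀ k, ρ k = (nlsObj r (v k) - nlsObj r (v k + s k)) /
      (nlsObj r (v k) - mdl k (s k)))
    (hvsucc : ∀ k, η₁ ≤ ρ k → v (k + 1) = v k + s k)
    (hvfail : ∀ k, ρ k < η₁ → v (k + 1) = v k)
    (hγvs : ∀ k, η₂ ≤ ρ k → γ (k + 1) = γ k / 2)
    (hγs : ∀ k, η₁ ≤ ρ k → ρ k < η₂ → γ (k + 1) = γ k)
    (hγu : ∀ k, ρ k < η₁ → γ (k + 1) = 2 * γ k)
    -- nonzero gradients along the iterates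
    (hgrad : ∀ k, nlsGrad r (v k) ≠ 0) :
    ∀ k, γ k ≤ max γ₀ (2 * L / (2 - η₂)) :=
  regularisation_parameter_uniform_upper_bound_general r hr L hL hlip η₁ η₂ γ₀ hη₂ v s γ hγinit
    hstep mdl hmdl ρ hρ hγvs hγs hγu hgrad
end

section
/- Guaranteed decrease per successful REG iteration: assume (A2), let η₁ ∈ (0,1), γ > 0 and γ_max ≥ γ. Fix v ∈ ℝ^n, let s solve (J(v)ᵀJ(v) + γI) s = −J(v)ᵀ r(v), define m(s) = (1/2)‖J(v)s + r(v)‖² + (γ/2)‖s‖², and suppose 𝒥(v) − 𝒥(v + s) ≥ η₁·(𝒥(v) − m(s)) (a successful iteration). Then 𝒥(v) − 𝒥(v + s) ≥ η₁·‖∇𝒥(v)‖² / (2(L_r² + γ_max)). -/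
/-!
Write `T = J(v)`, `b = r(v)` and `g = Tᵀb`. The step equation gives `⟪Ts, b⟫ = -(‖Ts‖² + γ‖s‖²)`,
so the model decrease `𝒥(v) - m(s)` equals `(‖Ts‖² + γ‖s‖²)/2`, and it gives
`g = -(TᵀTs + γs)`, so `‖g‖ ≤ ‖T‖‖Ts‖ + γ‖s‖`. By Cauchy–Schwarz in the weights `(‖T‖, √γ)`,
`‖g‖² ≤ (‖T‖² + γ)(‖Ts‖² + γ‖s‖²)`, and `‖T‖ ≤ L_r` by (A2). Hence the model decrease is at least
`‖g‖²/(2(L_r² + γ_max))`, and a successful iteration realises an `η₁`-fraction of it.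
-/

open scoped RealInnerProductSpace

open ContinuousLinearMap (adjoint)

theorem sq_mul_add_mul_le_mul_sq_add {a x y γ : ℝ} (hγ : 0 ≤ γ) :
    (a * x + γ * y) ^ 2 ≤ (a ^ 2 + γ) * (x ^ 2 + γ * y ^ 2) := by
  nlinarith [mul_nonneg hγ (sq_nonneg (a * y - x))]

section RegularizedStep

variable {E F : Type*} [NormedAddCommGroup E] [InnerProductSpace ℝ E] [CompleteSpace E]
  [NormedAddCommGroup F] [InnerProductSpace ℝ F] [CompleteSpace F]

def IsRegularizedStep (T : E →L[ℝ] F) (b : F) (γ : ℝ) (s : E) : Prop :=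
  adjoint T (T s) + γ • s = -adjoint T b

namespace IsRegularizedStep

variable {T : E →L[ℝ] F} {b : F} {γ : ℝ} {s : E}

theorem adjoint_apply_eq (h : IsRegularizedStep T b γ s) :
    adjoint T b = -(adjoint T (T s) + γ • s) := by
  rw [h, neg_neg]

theorem inner_apply_eq (h : IsRegularizedStep T b γ s) :
    ⟪T s, b⟫ = -(‖T s‖ ^ 2 + γ * ‖s‖ ^ 2) := by
  rw [← ContinuousLinearMap.adjoint_inner_right, h.adjoint_apply_eq, inner_neg_right,
    inner_add_right, ContinuousLinearMap.adjoint_inner_right, inner_smul_right,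
    real_inner_self_eq_norm_sq, real_inner_self_eq_norm_sq]

theorem model_decrease_eq (h : IsRegularizedStep T b γ s) :
    1 / 2 * ‖b‖ ^ 2 - (1 / 2 * ‖T s + b‖ ^ 2 + γ / 2 * ‖s‖ ^ 2)
      = (‖T s‖ ^ 2 + γ * ‖s‖ ^ 2) / 2 := by
  rw [norm_add_sq_real, h.inner_apply_eq]
  ring

theorem norm_adjoint_apply_le (h : IsRegularizedStep T b γ s) (hγ : 0 ≤ γ) :
    ‖adjoint T b‖ ≤ ‖T‖ * ‖T s‖ + γ * ‖s‖ := by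
  rw [h.adjoint_apply_eq, norm_neg]
  calc ‖adjoint T (T s) + γ • s‖ ≤ ‖adjoint T (T s)‖ + ‖γ • s‖ := norm_add_le _ _
    _ ≤ ‖T‖ * ‖T s‖ + γ * ‖s‖ := by
      gcongr
      · simpa only [LinearIsometryEquiv.norm_map] using (adjoint T).le_opNorm (T s)
      · rw [norm_smul, Real.norm_of_nonneg hγ]

theorem sq_norm_adjoint_apply_le (h : IsRegularizedStep T b γ s) (hγ : 0 ≤ γ) :
    ‖adjoint T b‖ ^ 2 ≤ (‖T‖ ^ 2 + γ) * (‖T s‖ ^ 2 + γ * ‖s‖ ^ 2) :=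
  (pow_le_pow_left₀ (norm_nonneg _) (h.norm_adjoint_apply_le hγ) 2).trans
    (sq_mul_add_mul_le_mul_sq_add hγ)

end IsRegularizedStep

end RegularizedStep

theorem regularisation_successful_iteration_decrease_general
    {n m : ℕ}
    (r : EuclideanSpace ℝ (Fin n) → EuclideanSpace ℝ (Fin m))
    -- (A2)
    (Lr : ℝ) (hLr : 0 < Lr) (hA2 : ∀ v w, ‖r v - r w‖ ≤ Lr * ‖v - w‖)
    (η₁ : ℝ) (hη₁ : η₁ ∈ Set.Ioo (0 : ℝ) 1)
    (γ γmax : ℝ) (hγ : 0 < γ) (hγmax : γ ≤ γmax)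
    (v : EuclideanSpace ℝ (Fin n))
    (s : EuclideanSpace ℝ (Fin n))
    (hstep : ContinuousLinearMap.adjoint (nlsJ r v) (nlsJ r v s) + γ • s =
      -ContinuousLinearMap.adjoint (nlsJ r v) (r v))
    -- the local model m(s) = (1/2)‖J(v)s + r(v)‖² + (γ/2)‖s‖²
    (mdl : EuclideanSpace ℝ (Fin n) → ℝ)
    (hmdl : ∀ sv, mdl sv = (1 / 2) * ‖nlsJ r v sv + r v‖ ^ 2 + (γ / 2) * ‖sv‖ ^ 2)
    -- a successful iteration
    (hsucc : η₁ * (nlsObj r v - mdl s) ≤ nlsObj r v - nlsObj r (v + s)) :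
    η₁ * ‖nlsGrad r v‖ ^ 2 / (2 * (Lr ^ 2 + γmax)) ≤ nlsObj r v - nlsObj r (v + s) := by
  have step : IsRegularizedStep (nlsJ r v) (r v) γ s := hstep
  have hJ : ‖nlsJ r v‖ ≤ Lr :=
    norm_fderiv_le_of_lip' ℝ hLr.le (Filter.Eventually.of_forall fun w ↦ hA2 w v)
  have hdecr : nlsObj r v - mdl s = (‖nlsJ r v s‖ ^ 2 + γ * ‖s‖ ^ 2) / 2 := by
    rw [hmdl, nlsObj, step.model_decrease_eq]
  have hL : 0 < Lr ^ 2 + γmax := add_pos (by positivity) (hγ.trans_le hγmax)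
  have hgrad : ‖nlsGrad r v‖ ^ 2 ≤ 2 * (Lr ^ 2 + γmax) * (nlsObj r v - mdl s) := by
    rw [hdecr]
    calc ‖nlsGrad r v‖ ^ 2
        ≤ (‖nlsJ r v‖ ^ 2 + γ) * (‖nlsJ r v s‖ ^ 2 + γ * ‖s‖ ^ 2) :=
          step.sq_norm_adjoint_apply_le hγ.le
      _ ≤ (Lr ^ 2 + γmax) * (‖nlsJ r v s‖ ^ 2 + γ * ‖s‖ ^ 2) := by gcongr
      _ = 2 * (Lr ^ 2 + γmax) * ((‖nlsJ r v s‖ ^ 2 + γ * ‖s‖ ^ 2) / 2) := by ring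
  calc η₁ * ‖nlsGrad r v‖ ^ 2 / (2 * (Lr ^ 2 + γmax))
      ≤ η₁ * (nlsObj r v - mdl s) := by
        rw [mul_div_assoc]
        gcongr
        · exact hη₁.1.le
        · rw [div_le_iff₀ (by positivity), mul_comm]
          exact hgrad
    _ ≤ nlsObj r v - nlsObj r (v + s) := hsucc

/-- Guaranteed decrease per successful REG iteration:
`𝒥(v) − 𝒥(v+s) ≥ η₁‖∇𝒥(v)‖²/(2(L_r² + γ_max))`. -/
theorem regularisation_successful_iteration_decrease
    {n m : ℕ} (hn : 0 < n) (hm : 0 < m)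
    (r : EuclideanSpace ℝ (Fin n) → EuclideanSpace ℝ (Fin m))
    (hr : ContDiff ℝ 1 r)
    -- (A2)
    (Lr : ℝ) (hLr : 0 < Lr) (hA2 : ∀ v w, ‖r v - r w‖ ≤ Lr * ‖v - w‖)
    (η₁ : ℝ) (hη₁ : η₁ ∈ Set.Ioo (0 : ℝ) 1)
    (γ γmax : ℝ) (hγ : 0 < γ) (hγmax : γ ≤ γmax)
    (v : EuclideanSpace ℝ (Fin n))
    (s : EuclideanSpace ℝ (Fin n))
    (hstep : ContinuousLinearMap.adjoint (nlsJ r v) (nlsJ r v s) + γ • s =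
      -ContinuousLinearMap.adjoint (nlsJ r v) (r v))
    -- the local model m(s) = (1/2)‖J(v)s + r(v)‖² + (γ/2)‖s‖²
    (mdl : EuclideanSpace ℝ (Fin n) → ℝ)
    (hmdl : ∀ sv, mdl sv = (1 / 2) * ‖nlsJ r v sv + r v‖ ^ 2 + (γ / 2) * ‖sv‖ ^ 2)
    -- a successful iteration
    (hsucc : η₁ * (nlsObj r v - mdl s) ≤ nlsObj r v - nlsObj r (v + s)) :
    η₁ * ‖nlsGrad r v‖ ^ 2 / (2 * (Lr ^ 2 + γmax)) ≤ nlsObj r v - nlsObj r (v + s) :=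
  regularisation_successful_iteration_decrease_general r Lr hLr hA2 η₁ hη₁ γ γmax hγ hγmax v s hstep
    mdl hmdl hsucc
end
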